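/- arXiv:2004.04654 — 4 statements merged into one kernel-verified Lean document; each statement's English description precedes it below -/
import Mathlib

section
/- Let G be a torsion-free group that contains a subgroup H of finite index with H isomorphic to ℤ. Then G is isomorphic to ℤ. -/
/-!
The normal core `N` of `H` has finite index and embeds in `ℤ`, so it is cyclic and each `g : G`
acts on it by conjugation as `n ↦ n` or `n ↦ n⁻¹`. In the second case `g` inverts
`g ^ [G : N] ∈ N`, which it also centralizes, so `g ^ (2 [G : N]) = 1` and `g = 1`. Hence `N` is
central, the transfer `G → N` is `g ↦ g ^ [G : N]`, and by torsion-freeness it embeds `G` into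
`N ⊆ ℤ`. An infinite cyclic group is `ℤ`.
-/

/-- A predicate on a monoid saying that only `1` is of finite order (old Mathlib `Monoid.IsTorsionFree`). -/
def Monoid.IsTorsionFree (G : Type*) [Monoid G] : Prop :=
  ∀ g : G, g ≠ 1 → ¬IsOfFinOrder g

open Subgroup Function

namespace Monoid.IsTorsionFree

variable {G : Type*} [Group G]

theorem eq_one_of_pow_eq_one (hG : Monoid.IsTorsionFree G) {g : G} {n : ℕ} (hn : n ≠ 0)
    (h : g ^ n = 1) : g = 1 :=
  by_contra fun hg ↦ hG g hg (isOfFinOrder_iff_pow_eq_one.2 ⟨n, Nat.pos_of_ne_zero hn, h⟩)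

theorem eq_one_of_conj_eq_inv_of_pow_mem_zpowers (hG : Monoid.IsTorsionFree G) {g a : G}
    (hinv : g * a * g⁻¹ = a⁻¹) {n : ℕ} (hn : n ≠ 0) (hpow : g ^ n ∈ zpowers a) : g = 1 := by
  obtain ⟨t, ht⟩ := mem_zpowers_iff.mp hpow
  have hinv_pow : g * g ^ n * g⁻¹ = (g ^ n)⁻¹ := by
    calc g * g ^ n * g⁻¹ = (g * a * g⁻¹) ^ t := by rw [conj_zpow, ht]
      _ = (g ^ n)⁻¹ := by rw [hinv, inv_zpow, ht]
  have hcomm : g * g ^ n * g⁻¹ = g ^ n := by group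
  refine hG.eq_one_of_pow_eq_one (n := n + n) (by omega) ?_
  rw [pow_add, mul_eq_one_iff_eq_inv, ← hinv_pow, hcomm]

theorem le_center_of_isCyclic (hG : Monoid.IsTorsionFree G) {N : Subgroup G} [N.Normal]
    [N.FiniteIndex] [IsCyclic N] : N ≤ center G := by
  obtain ⟨a, rfl⟩ := N.isCyclic_iff_exists_zpowers_eq_top.mp ‹_›
  rw [zpowers_le, mem_center_iff]
  intro g
  suffices g * a * g⁻¹ = a from (eq_mul_inv_iff_mul_eq.mp this.symm).symm
  by_cases ha : a = 1
  · rw [ha, mul_one, mul_inv_cancel]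
  have hconj : zpowers a = zpowers (g * a * g⁻¹) := by
    simpa using (Normal.map_conj_eq (zpowers a) g).symm
  rcases (zpowers_eq_zpowers_iff (hG a ha)).mp hconj with h | h
  · exact h.symm
  · rw [hG.eq_one_of_conj_eq_inv_of_pow_mem_zpowers h.symm FiniteIndex.index_ne_zero
      ((zpowers a).pow_index_mem g), one_mul, inv_one, mul_one]

theorem injective_transfer_of_le_center (hG : Monoid.IsTorsionFree G) {N : Subgroup G}
    [N.FiniteIndex] (hN : N ≤ center G) {A : Type*} [CommGroup A] {ϕ : N →* A}
    (hϕ : Injective ϕ) : Injective ϕ.transfer := by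
  refine (injective_iff_map_eq_one _).mpr fun g hg ↦ ?_
  rw [MonoidHom.transfer_eq_pow ϕ g fun k g₀ hk ↦ ?_, ← map_one ϕ] at hg
  · exact hG.eq_one_of_pow_eq_one FiniteIndex.index_ne_zero (congrArg Subtype.val (hϕ hg))
  · have hcentral := mem_center_iff.mp (hN hk) g₀
    calc g₀⁻¹ * g ^ k * g₀ = (g₀⁻¹ * g ^ k * g₀) * g₀ * g₀⁻¹ := by group
      _ = g ^ k := by rw [← hcentral]; group

end Monoid.IsTorsionFree

/-- A torsion-free group with a finite-index subgroup isomorphic to ℤ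
is itself isomorphic to ℤ. -/
theorem torsionFree_virtuallyZ_iso_Z (G : Type*) [Group G]
    (hTF : Monoid.IsTorsionFree G)
    (H : Subgroup G) (hfi : H.FiniteIndex)
    (hiso : Nonempty (H ≃* Multiplicative ℤ)) :
    Nonempty (G ≃* Multiplicative ℤ) := by
  obtain ⟨e⟩ := hiso
  let ϕ : H.normalCore →* Multiplicative ℤ := e.toMonoidHom.comp (inclusion H.normalCore_le)
  have hϕ : Injective ϕ := e.injective.comp (inclusion_injective _)
  have : IsCyclic H.normalCore := isCyclic_of_injective ϕ hϕ
  have : IsCyclic G := isCyclic_of_injective ϕ.transfer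
    (hTF.injective_transfer_of_le_center hTF.le_center_of_isCyclic hϕ)
  have : Infinite G :=
    Infinite.of_injective (Subtype.val ∘ e.symm) (Subtype.val_injective.comp e.symm.injective)
  exact ⟨intCyclicMulEquiv.symm⟩
end

section
/- If G is a group whose center Z(G) has finite index in G, then the commutator subgroup [G,G] is finite. (Schur's theorem.) -/
/-!
A commutator `⁅a, b⁆` does not change when `a` or `b` is multiplied by a central element, so it
only depends on the cosets of `a` and `b` modulo `Z(G)`. Hence a group whose center has finite
index has only finitely many commutators, and by Mathlib's form of Schur's theorem (proved via the
transfer `G → Z(G)` and Schreier's bound on the rank of finite-index subgroups) a group with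
finitely many commutators has a finite commutator subgroup.
-/

open scoped commutatorElement
open Subgroup

section

variable {G : Type*} [Group G]

theorem commutatorElement_mul_left_of_mem_center {z : G} (hz : z ∈ center G) (a b : G) :
    ⁅a * z, b⁆ = ⁅a, b⁆ := by
  rw [commutatorElement_mul_left_eq_conj_mul,
    commutatorElement_eq_one_iff_commute.mpr (mem_center_iff.mp hz b).symm, mul_one,
    mul_inv_cancel, one_mul]

theorem commutatorElement_mul_right_of_mem_center {w : G} (hw : w ∈ center G) (a b : G) :
    ⁅a, b * w⁆ = ⁅a, b⁆ := by
  rw [commutatorElement_mul_right_eq_mul_conj,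
    commutatorElement_eq_one_iff_commute.mpr (mem_center_iff.mp hw a), mul_one,
    mul_inv_cancel_right]

def commutatorElementQuotientCenter : G ⧸ center G → G ⧸ center G → G :=
  Quotient.lift₂ (fun a b => ⁅a, b⁆) fun a b a' b' ha hb => by
    have ha : a⁻¹ * a' ∈ center G := QuotientGroup.leftRel_apply.mp ha
    have hb : b⁻¹ * b' ∈ center G := QuotientGroup.leftRel_apply.mp hb
    rw [← mul_inv_cancel_left a a', commutatorElement_mul_left_of_mem_center ha,
      ← mul_inv_cancel_left b b', commutatorElement_mul_right_of_mem_center hb]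

theorem commutatorSet_subset_range_commutatorElementQuotientCenter :
    commutatorSet G ⊆
      Set.range (Function.uncurry (commutatorElementQuotientCenter (G := G))) := by
  rintro _ ⟨a, b, rfl⟩
  exact ⟨(a, b), rfl⟩

theorem finite_commutatorSet_of_finiteIndex_center [(center G).FiniteIndex] :
    (commutatorSet G).Finite :=
  have : Finite (G ⧸ center G) := finite_quotient_of_finiteIndex
  (Set.finite_range _).subset commutatorSet_subset_range_commutatorElementQuotientCenter

end

/-- Schur's theorem: if the center of `G` has finite index,
then the commutator subgroup of `G` is finite. -/
theorem schur_commutator_finite (G : Type*) [Group G]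
    (h : (Subgroup.center G).FiniteIndex) :
    Finite (commutator G) :=
  have : Finite (commutatorSet G) := finite_commutatorSet_of_finiteIndex_center.to_subtype
  inferInstance
end

section
/- Suppose (A_m) is a nondecreasing sequence of natural numbers and there exists a real constant a > 1 such that A_{⌈a·N²⌉} ≥ A_N + 1 for all sufficiently large N. Then there exists c₀ > 0 such that A_m ≥ log(log m)/log 2 − c₀ for all sufficiently large m. -/
open Filter

noncomputable def iterStep (a : ℝ) (b : ℕ) : ℕ → ℕ
  | 0 => b
  | k + 1 => ⌈a * (iterStep a b k : ℝ) ^ 2⌉₊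

/-- A nondecreasing sequence of naturals satisfying the quadratic
step recursion `A ⌈aN²⌉ ≥ A N + 1` grows at least doubly logarithmically. -/
theorem loglog_growth_of_quadratic_step (A : ℕ → ℕ) (hmono : Monotone A)
    (a : ℝ) (ha : 1 < a)
    (hstep : ∀ᶠ N : ℕ in atTop, (A N : ℝ) + 1 ≤ A ⌈a * (N : ℝ) ^ 2⌉₊) :
    ∃ c₀ > (0 : ℝ), ∀ᶠ m : ℕ in atTop,
      Real.log (Real.log m) / Real.log 2 - c₀ ≤ A m := by
  obtain ⟨N₁, hN₁⟩ := eventually_atTop.mp hstep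
  set b := max N₁ 2 with hbdef
  have hb2 : 2 ≤ b := le_max_right _ _
  have hbN : N₁ ≤ b := le_max_left _ _
  have ha1 : (1 : ℝ) ≤ a := ha.le
  set f := iterStep a b with hf
  have hsq : ∀ k, (f k) ^ 2 ≤ f (k + 1) := by
    intro k
    have h1 : ((f k : ℝ)) ^ 2 ≤ a * (f k : ℝ) ^ 2 := by
      nlinarith [sq_nonneg (f k : ℝ)]
    have h2 := Nat.le_ceil (a * (f k : ℝ) ^ 2)
    have hdef : f (k + 1) = ⌈a * (f k : ℝ) ^ 2⌉₊ := rfl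
    have : ((f k ^ 2 : ℕ) : ℝ) ≤ (f (k + 1) : ℝ) := by
      rw [hdef]
      push_cast
      exact h1.trans h2
    exact_mod_cast this
  have hfb : ∀ k, b ≤ f k := by
    intro k
    induction k with
    | zero => exact le_rfl
    | succ k ih =>
      have h := hsq k
      nlinarith
  have hflt : ∀ k, f k < f (k + 1) := by
    intro k
    have h := hsq k
    have hb := hfb k
    nlinarith
  have hfmono : StrictMono f := strictMono_nat_of_lt_succ hflt
  -- A grows along f
  have hAf : ∀ k, k ≤ A (f k) := by
    intro k
    induction k with
    | zero => exact Nat.zero_le _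
    | succ k ih =>
      have hge : N₁ ≤ f k := hbN.trans (hfb k)
      have := hN₁ (f k) hge
      have : (A (f k) : ℝ) + 1 ≤ (A (f (k + 1)) : ℝ) := this
      have h2 : A (f k) + 1 ≤ A (f (k + 1)) := by exact_mod_cast this
      omega
  -- upper bound on f
  set B : ℝ := (a + 1) * (b : ℝ) ^ 2 with hBdef
  have hB8 : (8 : ℝ) ≤ B := by
    have : (2 : ℝ) ≤ (b : ℝ) := by exact_mod_cast hb2
    nlinarith
  have hBpos : (0 : ℝ) < B := by linarith
  have hfB : ∀ k, (a + 1) * (f k : ℝ) ≤ B ^ (2 ^ k) := by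
    intro k
    induction k with
    | zero =>
      simp only [pow_zero, pow_one]
      have hf0 : f 0 = b := rfl
      have : (1 : ℝ) ≤ (b : ℝ) := by exact_mod_cast (by omega : 1 ≤ b)
      rw [hf0, hBdef]; nlinarith
    | succ k ih =>
      have hfk1 : (1 : ℝ) ≤ (f k : ℝ) := by
        exact_mod_cast (by have := hfb k; omega : 1 ≤ f k)
      have hceil : (f (k + 1) : ℝ) ≤ a * (f k : ℝ) ^ 2 + 1 := by
        have hdef : f (k + 1) = ⌈a * (f k : ℝ) ^ 2⌉₊ := rfl
        rw [hdef]
        exact (Nat.ceil_lt_add_one (by positivity : (0 : ℝ) ≤ a * (f k : ℝ) ^ 2)).le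
      have step : (a + 1) * (f (k + 1) : ℝ) ≤ ((a + 1) * (f k : ℝ)) ^ 2 := by
        nlinarith [sq_nonneg ((f k : ℝ) - 1)]
      calc (a + 1) * (f (k + 1) : ℝ) ≤ ((a + 1) * (f k : ℝ)) ^ 2 := step
        _ ≤ (B ^ (2 ^ k)) ^ 2 := by
            apply pow_le_pow_left₀ (by positivity) ih
        _ = B ^ (2 ^ (k + 1)) := by
            rw [← pow_mul, pow_succ]
  -- constant
  have hlog2 : (0 : ℝ) < Real.log 2 := Real.log_pos (by norm_num)
  have hlogB : (1 : ℝ) < Real.log B := by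
    rw [show (1:ℝ) = Real.log (Real.exp 1) by simp]
    apply Real.log_lt_log (Real.exp_pos 1)
    calc Real.exp 1 < 2.7182818286 := Real.exp_one_lt_d9
      _ ≤ B := by linarith
  refine ⟨1 + Real.log (Real.log B) / Real.log 2, add_pos one_pos (div_pos (Real.log_pos hlogB) hlog2), ?_⟩
  rw [eventually_atTop]
  refine ⟨b, fun m hm => ?_⟩
  -- find k with f k ≤ m < f (k+1)
  have hex : ∃ K, m < f K := ⟨m + 1, lt_of_lt_of_le (Nat.lt_succ_self m) hfmono.le_apply⟩
  have h0 : m < f (Nat.find hex) := Nat.find_spec hex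
  have hpos : 0 < Nat.find hex := by
    rcases Nat.eq_zero_or_pos (Nat.find hex) with h | h
    · rw [h] at h0
      have hb0 : f 0 = b := rfl
      omega
    · exact h
  set k := Nat.find hex - 1 with hk
  have hK1 : Nat.find hex = k + 1 := by omega
  have hfkm : f k ≤ m := by
    have := Nat.find_min hex (show k < Nat.find hex by omega)
    omega
  have hmlt : m < f (k + 1) := hK1 ▸ h0
  -- A m ≥ k
  have hAm : (k : ℝ) ≤ (A m : ℝ) := by
    exact_mod_cast (hAf k).trans (hmono hfkm)
  -- m < B^(2^(k+1))
  have hmB : (m : ℝ) ≤ B ^ (2 ^ (k + 1)) := by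
    have h1 : (m : ℝ) ≤ (f (k + 1) : ℝ) := by exact_mod_cast hmlt.le
    have h2 : (f (k + 1) : ℝ) ≤ (a + 1) * (f (k + 1) : ℝ) := by
      nlinarith [Nat.cast_nonneg (f (k+1)) (α := ℝ)]
    linarith [hfB (k + 1)]
  have hm2 : (2 : ℝ) ≤ (m : ℝ) := by exact_mod_cast hb2.trans hm
  have hlogm : (0 : ℝ) < Real.log m := Real.log_pos (by linarith)
  have hlogmB : Real.log m ≤ (2 ^ (k + 1) : ℝ) * Real.log B := by
    calc Real.log m ≤ Real.log (B ^ (2 ^ (k + 1))) :=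
          Real.log_le_log (by linarith) hmB
      _ = (2 ^ (k + 1) : ℕ) * Real.log B := Real.log_pow _ _
      _ = (2 ^ (k + 1) : ℝ) * Real.log B := by push_cast; ring
  have hloglog : Real.log (Real.log m) ≤ (k + 1 : ℝ) * Real.log 2 + Real.log (Real.log B) := by
    calc Real.log (Real.log m) ≤ Real.log ((2 ^ (k + 1) : ℝ) * Real.log B) :=
          Real.log_le_log hlogm hlogmB
      _ = Real.log ((2:ℝ) ^ (k + 1)) + Real.log (Real.log B) := by
          rw [Real.log_mul (pow_ne_zero _ two_ne_zero) (by linarith : (0:ℝ) < Real.log B).ne']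
      _ = (k + 1 : ℝ) * Real.log 2 + Real.log (Real.log B) := by
          rw [Real.log_pow]; push_cast; ring
  have hdiv : Real.log (Real.log m) / Real.log 2 ≤
      ((k + 1 : ℝ) * Real.log 2 + Real.log (Real.log B)) / Real.log 2 :=
    div_le_div_of_nonneg_right hloglog hlog2.le |>.trans_eq rfl
  have heq : ((k + 1 : ℝ) * Real.log 2 + Real.log (Real.log B)) / Real.log 2 =
      (k : ℝ) + 1 + Real.log (Real.log B) / Real.log 2 := by
    field_simp
  rw [heq] at hdiv
  linarith
end

section
/- Let G be a group of polynomial growth of degree strictly less than 2 (i.e., for every finite generating set of any finitely generated subgroup, the ball counting function is o(r²)) and assume G is torsion-free and infinite. Then G is isomorphic to ℤ. -/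
/-!
If `⟨z⟩` had infinite index for some `z` of infinite order, the ball of radius `r` would meet at
least `r + 1` cosets of `⟨z⟩`, and multiplying representatives of these cosets by
`z ^ 0, …, z ^ r` would put `(r + 1) ^ 2` distinct elements into the ball of radius `2 r`,
against subquadratic growth. In a torsion-free such group every cyclic subgroup `≠ 1` therefore
has finite index; hence so does every centralizer and, `G` being finitely generated, the center.
For a central `z ≠ 1` the transfer `G → ⟨z⟩`, `g ↦ g ^ [G : ⟨z⟩]`, is then injective by
torsion-freeness, so `G` is infinite cyclic.
-/

open Filter Asymptotics

/-- The word length of `g` with respect to a generating set `S`. -/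
noncomputable def wordLength {G : Type*} [Group G] (S : Set G) (g : G) : ℕ :=
  sInf {m | ∃ l : List G, (∀ x ∈ l, x ∈ S ∪ S⁻¹ ∪ {1}) ∧ l.length = m ∧ l.prod = g}

open scoped Pointwise

section WordLength

variable {G : Type*} [Group G]

lemma Set.list_prod_mem_pow {A : Set G} {l : List G} (hl : ∀ x ∈ l, x ∈ A) :
    l.prod ∈ A ^ l.length := by
  induction l with
  | nil => simp
  | cons x l ih =>
    rw [List.prod_cons, List.length_cons, pow_succ']
    exact Set.mul_mem_mul (hl x List.mem_cons_self)
      (ih fun y hy => hl y (List.mem_cons_of_mem x hy))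

lemma Set.exists_list_of_mem_pow {A : Set G} {n : ℕ} {g : G} (hg : g ∈ A ^ n) :
    ∃ l : List G, (∀ x ∈ l, x ∈ A) ∧ l.length = n ∧ l.prod = g := by
  induction n generalizing g with
  | zero => exact ⟨[], by simp, rfl, (Set.mem_one.1 hg).symm⟩
  | succ n ih =>
    rw [pow_succ'] at hg
    obtain ⟨a, ha, h, hh, rfl⟩ := hg
    obtain ⟨l, hl, rfl, rfl⟩ := ih hh
    exact ⟨a :: l, List.forall_mem_cons.2 ⟨ha, hl⟩, rfl, rfl⟩

lemma Set.Finite.pow {A : Set G} (hA : A.Finite) (n : ℕ) : (A ^ n).Finite := by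
  induction n with
  | zero => simp
  | succ n ih => rw [pow_succ]; exact ih.mul hA

lemma wordLength_le_iff {S : Set G} (hS : Subgroup.closure S = ⊤) {g : G} {n : ℕ} :
    wordLength S g ≤ n ↔ g ∈ (S ∪ S⁻¹ ∪ {1}) ^ n := by
  refine ⟨fun h => ?_, fun h => Nat.sInf_le (Set.exists_list_of_mem_pow h)⟩
  have hg : g ∈ (Subgroup.closure S).toSubmonoid := hS ▸ Subgroup.mem_top g
  rw [Subgroup.closure_toSubmonoid] at hg
  obtain ⟨l, hl, hprod⟩ := Submonoid.exists_list_of_mem_closure hg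
  obtain ⟨l', hl', hlen, rfl⟩ := Nat.sInf_mem
    (⟨l.length, l, fun x hx => Or.inl (hl x hx), rfl, hprod⟩ :
      {m | ∃ l : List G, (∀ x ∈ l, x ∈ S ∪ S⁻¹ ∪ {1}) ∧ l.length = m ∧ l.prod = g}.Nonempty)
  exact Set.pow_subset_pow_right (by simp) (hlen ▸ h) (Set.list_prod_mem_pow hl')

lemma card_wordLength_le_eq_ncard_pow {S : Set G} (hS : Subgroup.closure S = ⊤) (n : ℕ) :
    Nat.card {g : G // wordLength S g ≤ n} = ((S ∪ S⁻¹ ∪ {1}) ^ n).ncard := by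
  rw [← Nat.card_coe_set_eq]
  exact Nat.card_congr (Equiv.subtypeEquivRight fun _ => wordLength_le_iff hS)

end WordLength

lemma not_isLittleO_sq_of_sq_le {f : ℕ → ℝ} (h : ∀ r : ℕ, ((r : ℝ) + 1) ^ 2 ≤ f (2 * r)) :
    ¬ f =o[atTop] (fun r : ℕ => (r : ℝ) ^ 2) := by
  intro hf
  obtain ⟨N, hN⟩ := eventually_atTop.1 (hf.def (by norm_num : (0 : ℝ) < 1 / 8))
  have hle := (h N).trans ((Real.le_norm_self _).trans (hN (2 * N) (by omega)))
  rw [Real.norm_of_nonneg (by positivity)] at hle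
  push_cast at hle
  nlinarith [(N.cast_nonneg : (0 : ℝ) ≤ N)]

def HasSubquadraticGrowth (G : Type*) [Group G] : Prop :=
  ∀ S : Finset G, Subgroup.closure (S : Set G) = ⊤ →
    (fun r : ℕ => (Nat.card {g : G // wordLength (S : Set G) g ≤ r} : ℝ))
      =o[atTop] (fun r : ℕ => (r : ℝ) ^ 2)

section Growth

variable {G : Type*} [Group G]

theorem not_isLittleO_sq_of_le_ncard_image_pow {S : Set G} (hS : Subgroup.closure S = ⊤)
    (hSfin : S.Finite) {z : G} (hzS : z ∈ S) (hz : ¬IsOfFinOrder z)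
    (hcosets : ∀ r : ℕ,
      r + 1 ≤ ((↑) '' ((S ∪ S⁻¹ ∪ {1}) ^ r) : Set (G ⧸ Subgroup.zpowers z)).ncard) :
    ¬ (fun r : ℕ => (Nat.card {g : G // wordLength S g ≤ r} : ℝ))
      =o[atTop] (fun r : ℕ => (r : ℝ) ^ 2) := by
  set A := S ∪ S⁻¹ ∪ {1}
  have h1A : (1 : G) ∈ A := Or.inr rfl
  have hAfin : A.Finite := (hSfin.union hSfin.inv).union (Set.finite_singleton 1)
  refine not_isLittleO_sq_of_sq_le fun r => ?_
  obtain ⟨u, huA, hu_inj, hu_image⟩ :=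
    (Set.surjOn_image ((↑) : G → G ⧸ Subgroup.zpowers z) (A ^ r)).exists_subset_injOn_image_eq
  set P : Set (G × ℕ) := u ×ˢ (Finset.range (r + 1) : Set ℕ)
  have hP_inj : Set.InjOn (fun p : G × ℕ => p.1 * z ^ p.2) P := by
    rintro ⟨g, i⟩ ⟨hg, -⟩ ⟨g', j⟩ ⟨hg', -⟩ (hgg' : g * z ^ i = g' * z ^ j)
    have hcoset : ((g : G ⧸ Subgroup.zpowers z)) = g' := by
      rw [← QuotientGroup.mk_mul_of_mem g (Subgroup.npow_mem_zpowers z i), hgg',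
        QuotientGroup.mk_mul_of_mem g' (Subgroup.npow_mem_zpowers z j)]
    obtain rfl := hu_inj hg hg' hcoset
    exact Prod.ext rfl (injective_pow_iff_not_isOfFinOrder.2 hz (mul_left_cancel hgg'))
  have hP_maps : (fun p : G × ℕ => p.1 * z ^ p.2) '' P ⊆ A ^ (2 * r) := by
    rintro _ ⟨⟨g, i⟩, ⟨hg, hi⟩, rfl⟩
    rw [two_mul, pow_add]
    have hi : i ≤ r := Nat.lt_succ_iff.1 (Finset.mem_range.1 hi)
    exact Set.mul_mem_mul (huA hg)
      (Set.pow_subset_pow_right h1A hi (Set.pow_mem_pow (Or.inl (Or.inl hzS))))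
  have hcard : (r + 1) ^ 2 ≤ Nat.card {g : G // wordLength S g ≤ 2 * r} := calc
    (r + 1) ^ 2 ≤ u.ncard * (r + 1) := by
      rw [← hu_inj.ncard_image, hu_image, sq]
      exact Nat.mul_le_mul_right _ (hcosets r)
    _ = P.ncard := by rw [Set.ncard_prod, Set.ncard_coe_finset, Finset.card_range]
    _ = ((fun p : G × ℕ => p.1 * z ^ p.2) '' P).ncard := hP_inj.ncard_image.symm
    _ ≤ (A ^ (2 * r)).ncard := Set.ncard_le_ncard hP_maps (hAfin.pow _)
    _ = Nat.card {g : G // wordLength S g ≤ 2 * r} := (card_wordLength_le_eq_ncard_pow hS _).symm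
  exact_mod_cast hcard

theorem le_ncard_image_pow {A : Set G} (hA : A.Finite) (h1A : (1 : G) ∈ A)
    (hgen : ∀ g : G, ∃ n, g ∈ A ^ n) (H : Subgroup G) [Infinite (G ⧸ H)] (r : ℕ) :
    r + 1 ≤ ((↑) '' (A ^ r) : Set (G ⧸ H)).ncard := by
  set B : ℕ → Set (G ⧸ H) := fun n => (↑) '' (A ^ n)
  have hB_succ : ∀ n, B (n + 1) = A • B n := by
    intro n
    ext q
    simp only [B, pow_succ', Set.mem_image, Set.mem_mul, Set.mem_smul]
    constructor
    · rintro ⟨_, ⟨a, ha, x, hx, rfl⟩, rfl⟩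
      exact ⟨a, ha, _, ⟨x, hx, rfl⟩, rfl⟩
    · rintro ⟨a, ha, _, ⟨x, hx, rfl⟩, rfl⟩
      exact ⟨_, ⟨a, ha, x, hx, rfl⟩, rfl⟩
  have hB_mono : ∀ {m n}, m ≤ n → B m ⊆ B n := fun hmn =>
    Set.image_mono (Set.pow_subset_pow_right h1A hmn)
  have hB_fin : ∀ n, (B n).Finite := fun n => (hA.pow n).image _
  -- once the image stops growing it is stable, hence exhausts the infinite quotient
  have hB_ne : ∀ n, B n ≠ B (n + 1) := by
    intro n hn
    have hstable : ∀ k, B (n + k) = B n := by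
      intro k
      induction k with
      | zero => rfl
      | succ k ih => rw [← add_assoc, hB_succ, ih, ← hB_succ, hn]
    refine Set.infinite_univ (α := G ⧸ H) ((hB_fin n).subset fun q _ => ?_)
    obtain ⟨g, rfl⟩ := QuotientGroup.mk_surjective q
    obtain ⟨k, hk⟩ := hgen g
    exact hstable k ▸ hB_mono (Nat.le_add_left k n) ⟨g, hk, rfl⟩
  change r + 1 ≤ (B r).ncard
  induction r with
  | zero => simp [B]
  | succ r ih =>
    have := Set.ncard_lt_ncard ((hB_mono (Nat.le_add_right r 1)).ssubset_of_ne (hB_ne r)) (hB_fin _)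
    omega

end Growth

namespace HasSubquadraticGrowth

variable {G : Type*} [Group G] [Group.FG G]

open Subgroup

theorem finiteIndex_zpowers (hG : HasSubquadraticGrowth G) {z : G} (hz : ¬IsOfFinOrder z) :
    (zpowers z).FiniteIndex := by
  classical
  by_contra hfin
  have : Infinite (G ⧸ zpowers z) := index_eq_zero_iff_infinite.1 (not_finiteIndex_iff.1 hfin)
  obtain ⟨T, hT⟩ := Group.fg_def.1 ‹Group.FG G›
  set S : Finset G := insert z T
  have hS : closure (S : Set G) = ⊤ :=
    top_le_iff.1 (hT ▸ closure_mono (by simp [S, Set.subset_insert]))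
  have hSfin : (S : Set G).Finite := S.finite_toSet
  refine not_isLittleO_sq_of_le_ncard_image_pow hS hSfin (by simp [S]) hz
    (le_ncard_image_pow ((hSfin.union hSfin.inv).union (Set.finite_singleton 1)) (Or.inr rfl)
      (fun g => ⟨_, (wordLength_le_iff hS).1 le_rfl⟩) _) (hG S hS)

theorem finiteIndex_centralizer (hG : HasSubquadraticGrowth G) (hTF : Monoid.IsTorsionFree G)
    (g : G) : (centralizer {g}).FiniteIndex := by
  by_cases hg : g = 1
  · rw [hg, centralizer_eq_top_iff_subset.2 (by simp)]
    infer_instance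
  · have := hG.finiteIndex_zpowers (hTF g hg)
    exact finiteIndex_of_le (zpowers_le.2 (mem_centralizer_singleton_iff.2 rfl))

end HasSubquadraticGrowth

section TorsionFree

variable {G : Type*} [Group G]

open Subgroup

theorem Monoid.IsTorsionFree.eq_one_of_pow_eq_one_s18 (hTF : Monoid.IsTorsionFree G) {g : G} {n : ℕ}
    (hn : n ≠ 0) (h : g ^ n = 1) : g = 1 := by
  by_contra hg
  exact hTF g hg (isOfFinOrder_iff_pow_eq_one.2 ⟨n, Nat.pos_of_ne_zero hn, h⟩)

theorem Monoid.IsTorsionFree.exists_ne_one_mem [Nontrivial G] (hTF : Monoid.IsTorsionFree G)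
    (H : Subgroup G) [H.Normal] [H.FiniteIndex] : ∃ z ∈ H, z ≠ 1 := by
  obtain ⟨g, hg⟩ := exists_ne (1 : G)
  exact ⟨g ^ H.index, H.pow_index_mem g,
    fun h => hg (hTF.eq_one_of_pow_eq_one_s18 FiniteIndex.index_ne_zero h)⟩

theorem finiteIndex_center_of_forall_finiteIndex_centralizer [Group.FG G]
    (h : ∀ g : G, (centralizer {g}).FiniteIndex) : (center G).FiniteIndex := by
  obtain ⟨T, hT⟩ := Group.fg_def.1 ‹Group.FG G›
  rw [center_eq_infi' hT]
  exact finiteIndex_iInf fun g => h g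

open scoped IsMulCommutative in
theorem Monoid.IsTorsionFree.isCyclic_of_le_center (hTF : Monoid.IsTorsionFree G)
    {H : Subgroup G} [IsCyclic H] [H.FiniteIndex] (hH : H ≤ center G) : IsCyclic G := by
  let φ : G →* H := MonoidHom.transfer (MonoidHom.id H)
  -- conjugation fixes the central subgroup `H`, so the transfer is `g ↦ g ^ H.index`
  have hφ : ∀ g, (φ g : G) = g ^ H.index := fun g => congrArg Subtype.val <|
    MonoidHom.transfer_eq_pow (MonoidHom.id H) g fun k g₀ hk =>
      mul_right_cancel ((mem_center_iff.1 (hH hk) g₀).symm.trans (by group))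
  refine isCyclic_of_injective φ ((injective_iff_map_eq_one φ).2 fun g hg => ?_)
  exact hTF.eq_one_of_pow_eq_one_s18 FiniteIndex.index_ne_zero (by rw [← hφ, hg]; rfl)

end TorsionFree

/-- A finitely generated, torsion-free, infinite group of subquadratic growth
is isomorphic to ℤ. -/
theorem subquadratic_growth_torsionFree_iso_Z (G : Type*) [Group G] [Infinite G]
    (hfg : Group.FG G) (hTF : Monoid.IsTorsionFree G)
    (hgrowth : ∀ S : Finset G, Subgroup.closure (S : Set G) = ⊤ →
      (fun r : ℕ => (Nat.card {g : G // wordLength (S : Set G) g ≤ r} : ℝ))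
        =o[atTop] (fun r : ℕ => (r : ℝ) ^ 2)) :
    Nonempty (G ≃* Multiplicative ℤ) := by
  have hG : HasSubquadraticGrowth G := hgrowth
  have := finiteIndex_center_of_forall_finiteIndex_centralizer (hG.finiteIndex_centralizer hTF)
  obtain ⟨z, hz_center, hz⟩ := hTF.exists_ne_one_mem (Subgroup.center G)
  have := hG.finiteIndex_zpowers (hTF z hz)
  have := hTF.isCyclic_of_le_center (Subgroup.zpowers_le.2 hz_center)
  exact ⟨intCyclicMulEquiv.symm⟩
end
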